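/- Let n ≥ 2 be an integer, let 0 < ε and δ ≥ 2ε, and let a : [ε,δ] → ℝ be continuously differentiable. Suppose there exists r₁ with ε < r₁ ≤ 2ε and |a(r₁)| < |a(ε)|/2. Then ∫_ε^{δ} a'(r)²·r^{n−1} dr ≥ ε^{n−1}·a(ε)²/(4(r₁ − ε)) ≥ ε^{n−2}·a(ε)²/4. -/
import Mathlib


open MeasureTheory intervalIntegral

/-- If the modulus of a continuously differentiable function `a` on `[ε, δ]` drops below half
its value at `ε` at some radius `r₁ ∈ (ε, 2ε]`, then
`∫_ε^δ a'(r)² r^(n-1) dr ≥ ε^(n-1) a(ε)²/(4(r₁ - ε)) ≥ ε^(n-2) a(ε)²/4`. -/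
theorem stmt9 (n : ℕ) (hn : 2 ≤ n) (ε δ r₁ : ℝ) (hε : 0 < ε) (hδ : 2 * ε ≤ δ)
    (hr₁ : ε < r₁) (hr₁' : r₁ ≤ 2 * ε)
    (a a' : ℝ → ℝ)
    (hderiv : ∀ r ∈ Set.Icc ε δ, HasDerivAt a (a' r) r)
    (hcont : ContinuousOn a' (Set.Icc ε δ))
    (hhalf : |a r₁| < |a ε| / 2) :
    ε ^ (n - 1) * (a ε) ^ 2 / (4 * (r₁ - ε)) ≤ ∫ r in ε..δ, (a' r) ^ 2 * r ^ (n - 1) ∧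
    ε ^ (n - 2) * (a ε) ^ 2 / 4 ≤ ε ^ (n - 1) * (a ε) ^ 2 / (4 * (r₁ - ε)) := by
  have hεδ : ε ≤ δ := le_trans (by linarith) hδ
  have hr₁δ : r₁ ≤ δ := le_trans hr₁' hδ
  have hεr₁ : ε ≤ r₁ := hr₁.le
  have hL : 0 < r₁ - ε := by linarith
  have hsub1 : Set.uIcc ε r₁ ⊆ Set.Icc ε δ := by
    rw [Set.uIcc_of_le hεr₁]; exact Set.Icc_subset_Icc le_rfl hr₁δ
  have hsub2 : Set.uIcc ε δ ⊆ Set.Icc ε δ := by rw [Set.uIcc_of_le hεδ]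
  have hsub3 : Set.uIcc r₁ δ ⊆ Set.Icc ε δ := by
    rw [Set.uIcc_of_le hr₁δ]; exact Set.Icc_subset_Icc hεr₁ le_rfl
  -- FTC
  have hInt1 : IntervalIntegrable a' volume ε r₁ := (hcont.mono hsub1).intervalIntegrable
  have hFTC : ∫ r in ε..r₁, a' r = a r₁ - a ε := by
    apply intervalIntegral.integral_eq_sub_of_hasDerivAt
    · intro x hx; exact hderiv x (hsub1 hx)
    · exact hInt1
  set I : ℝ := ∫ r in ε..r₁, a' r with hI
  set L : ℝ := r₁ - ε with hLdef
  set J : ℝ := ∫ r in ε..r₁, (a' r) ^ 2 with hJ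
  have hIntSq : IntervalIntegrable (fun r => (a' r) ^ 2) volume ε r₁ :=
    ((hcont.mono hsub1).pow 2).intervalIntegrable
  -- Cauchy–Schwarz via quadratic trick
  have hCS : I ^ 2 ≤ L * J := by
    have h0 : 0 ≤ ∫ r in ε..r₁, (a' r - I / L) ^ 2 := by
      apply intervalIntegral.integral_nonneg hεr₁
      intro x _; positivity
    have hexp : (∫ r in ε..r₁, (a' r - I / L) ^ 2)
        = J - 2 * (I / L) * I + (I / L) ^ 2 * L := by
      have : ∀ r, (a' r - I / L) ^ 2 = (a' r) ^ 2 - 2 * (I / L) * a' r + (I / L) ^ 2 := by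
        intro r; ring
      simp_rw [this]
      rw [intervalIntegral.integral_add (hIntSq.sub (hInt1.const_mul _))
            intervalIntegrable_const,
          intervalIntegral.integral_sub hIntSq (hInt1.const_mul _),
          intervalIntegral.integral_const_mul, intervalIntegral.integral_const]
      simp [hI, hLdef, hJ]
      ring
    have hLne : L ≠ 0 := ne_of_gt hL
    have h0' := h0
    rw [hexp] at h0'
    set c := I / L with hcdef
    have hc : I = c * L := (div_mul_cancel₀ I hLne).symm
    nlinarith [h0', hc, hL, sq_nonneg c, mul_nonneg hL.le (sq_nonneg c)]
  -- lower bound on I²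
  have hIlb : (a ε) ^ 2 / 4 ≤ I ^ 2 := by
    have h1 : |a ε| / 2 ≤ |I| := by
      rw [hFTC]
      have := abs_sub_abs_le_abs_sub (a ε) (a r₁)
      have h2 : |a r₁ - a ε| = |a ε - a r₁| := abs_sub_comm _ _
      rw [h2]
      linarith [hhalf, this]
    have := mul_self_le_mul_self (by positivity) h1
    calc (a ε) ^ 2 / 4 = (|a ε| / 2) * (|a ε| / 2) := by
          rw [div_mul_div_comm, ← abs_mul, ← sq, abs_sq]; norm_num
      _ ≤ |I| * |I| := this
      _ = I ^ 2 := by rw [← abs_mul, ← sq, abs_sq]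
  have hJlb : (a ε) ^ 2 / (4 * L) ≤ J := by
    rw [div_le_iff₀ (by positivity)]
    nlinarith [hCS, hIlb, hL]
  -- relate J to the weighted integral
  have hIntW1 : IntervalIntegrable (fun r => (a' r) ^ 2 * r ^ (n - 1)) volume ε r₁ :=
    (((hcont.mono hsub1).pow 2).mul ((continuousOn_id.pow (n-1)))).intervalIntegrable
  have hIntW2 : IntervalIntegrable (fun r => (a' r) ^ 2 * r ^ (n - 1)) volume r₁ δ :=
    (((hcont.mono hsub3).pow 2).mul ((continuousOn_id.pow (n-1)))).intervalIntegrable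
  have hmono : ε ^ (n - 1) * J ≤ ∫ r in ε..r₁, (a' r) ^ 2 * r ^ (n - 1) := by
    rw [hJ, ← intervalIntegral.integral_const_mul]
    apply intervalIntegral.integral_mono_on hεr₁ (hIntSq.const_mul _) hIntW1
    intro x hx
    have hx1 : ε ≤ x := hx.1
    have : ε ^ (n - 1) ≤ x ^ (n - 1) := pow_le_pow_left₀ hε.le hx1 _
    rw [mul_comm]
    exact mul_le_mul_of_nonneg_left this (by positivity)
  have hsplit : (∫ r in ε..r₁, (a' r) ^ 2 * r ^ (n - 1))
      ≤ ∫ r in ε..δ, (a' r) ^ 2 * r ^ (n - 1) := by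
    rw [← intervalIntegral.integral_add_adjacent_intervals hIntW1 hIntW2]
    have : 0 ≤ ∫ r in r₁..δ, (a' r) ^ 2 * r ^ (n - 1) := by
      apply intervalIntegral.integral_nonneg hr₁δ
      intro x hx
      have : (0:ℝ) ≤ x := le_trans hε.le (le_trans hεr₁ hx.1)
      positivity
    linarith
  constructor
  · have h1 : ε ^ (n - 1) * (a ε) ^ 2 / (4 * L) ≤ ε ^ (n - 1) * J := by
      rw [mul_div_assoc]
      exact mul_le_mul_of_nonneg_left hJlb (by positivity)
    calc ε ^ (n - 1) * (a ε) ^ 2 / (4 * (r₁ - ε)) ≤ ε ^ (n - 1) * J := h1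
      _ ≤ _ := le_trans hmono hsplit
  · have hLε : L ≤ ε := by simp [hLdef]; linarith
    have hpow : ε ^ (n - 1) = ε ^ (n - 2) * ε := by
      rw [← pow_succ]
      congr 1
      omega
    rw [hpow, div_le_div_iff₀ (by norm_num) (by positivity)]
    nlinarith [pow_pos hε (n-2), sq_nonneg (a ε), hL, hLε,
      mul_nonneg (pow_pos hε (n-2)).le (sq_nonneg (a ε))]
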